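/- Let s > t ≥ 1 with (s,t) ≠ (2,1) and n, r positive integers. Then Σ_{k=n}^∞ 1/f_{rk}(s,-t) > 1/(f_{rn}(s,-t) - f_{r(n-1)}(s,-t)); equivalently, the floor of the reciprocal of the tail sum is strictly less than f_{rn}(s,-t) - f_{r(n-1)}(s,-t). -/
import Mathlib


/-- Generalized Fibonacci sequence: f 0 = 0, f 1 = 1, f (n+2) = s * f (n+1) + t * f n. -/
def genFib (s t : ℤ) : ℕ → ℤ
  | 0 => 0
  | 1 => 1
  | n + 2 => s * genFib s t (n + 1) + t * genFib s t n

def Zf (s t : ℤ) (r m : ℕ) : ℤ := genFib s (-t) (r*m)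

noncomputable def Gf (s t : ℤ) (r : ℕ) (p : ℕ) : ℝ :=
  1 / ((Zf s t r (p+1) : ℝ) - (Zf s t r p : ℝ))

noncomputable def Sf (s t : ℤ) (r : ℕ) (p : ℕ) : ℝ :=
  ∑' k : ℕ, 1 / ((Zf s t r (p+1+k) : ℝ))

variable {s t : ℤ}

lemma gf_rec (n : ℕ) : genFib s t (n+2) = s * genFib s t (n+1) + t * genFib s t n := rfl

lemma gf_growth (ht : 1 ≤ t) (hts : t < s) (hne : ¬(s = 2 ∧ t = 1)) :
    ∀ n, 0 ≤ genFib s (-t) n ∧ 2 * genFib s (-t) n ≤ genFib s (-t) (n+1) := by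
  have hs : 3 ≤ s := by omega
  intro n
  induction n with
  | zero => simp [genFib]
  | succ n ih =>
    obtain ⟨h0, h1⟩ := ih
    have h0' : (0:ℤ) ≤ genFib s (-t) (n+1) := by linarith
    refine ⟨h0', ?_⟩
    rw [gf_rec]
    nlinarith [mul_nonneg (by linarith : (0:ℤ) ≤ s - 1 - t) h0,
      mul_nonneg (by linarith : (0:ℤ) ≤ s - 3) h0']

lemma gf_add :
    ∀ n m : ℕ, genFib s (-t) (m+n+1) =
      genFib s (-t) (m+1) * genFib s (-t) (n+1) - t * genFib s (-t) m * genFib s (-t) n := by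
  intro n
  induction n using Nat.twoStepInduction with
  | zero => intro m; simp [genFib]
  | one =>
    intro m
    rw [show m + 1 + 1 = m + 2 from rfl, gf_rec, gf_rec]
    simp [genFib]
    ring
  | more n ih1 ih2 =>
    intro m
    have e1 : genFib s (-t) (m + (n + 2) + 1) = s * genFib s (-t) (m + (n+1) + 1) - t * genFib s (-t) (m + n + 1) := by
      rw [show m + (n+2) + 1 = (m+n+1)+2 from by omega, gf_rec, show m+n+1+1 = m+(n+1)+1 from by omega]
      ring
    have e2 : genFib s (-t) (n+2+1) = s * genFib s (-t) (n+2) - t * genFib s (-t) (n+1) := by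
      rw [show n+2+1 = (n+1)+2 from rfl, gf_rec, show n+1+1 = n+2 from rfl]
      ring
    rw [e1, e2, ih1, ih2, show n+1+1 = n+2 from rfl, gf_rec]
    ring

lemma gf_d : ∀ a c : ℕ, genFib s (-t) (a+1) * genFib s (-t) (a+c) -
    genFib s (-t) a * genFib s (-t) (a+c+1) = t^a * genFib s (-t) c := by
  intro a
  induction a with
  | zero => intro c; simp [genFib]
  | succ a ih =>
    intro c
    have e1 : genFib s (-t) (a+1+c) = genFib s (-t) ((a+c)+1) := by rw [show a+1+c = a+c+1 from by omega]
    have e2 : genFib s (-t) (a+1+c+1) = s * genFib s (-t) (a+c+1) - t * genFib s (-t) (a+c) := by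
      rw [show a+1+c+1 = (a+c)+2 from by omega, gf_rec]
      ring
    have e3 : genFib s (-t) (a+1+1) = s * genFib s (-t) (a+1) - t * genFib s (-t) a := by
      rw [show a+1+1 = a+2 from rfl, gf_rec]
      ring
    rw [e1, e2, e3]
    have := ih c
    ring_nf
    ring_nf at this
    linear_combination (t : ℤ) * this

lemma gf_cat : ∀ a q : ℕ, genFib s (-t) (a+q+1)^2 - genFib s (-t) a * genFib s (-t) (a+2*q+2) =
    t^a * genFib s (-t) (q+1)^2 := by
  intro a q
  have h1 := gf_add (s := s) (t := t) q a
  have h2 := gf_add (s := s) (t := t) q (a+q+1)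
  have h3 := gf_d (s := s) (t := t) a (q+1)
  rw [show a+q+1+q+1 = a+2*q+2 from by omega] at h2
  rw [show a+(q+1) = a+q+1 from by omega] at h3
  linear_combination genFib s (-t) (a+q+1) * h1 - genFib s (-t) a * h2 + genFib s (-t) (q+1) * h3

lemma gf_pow2 (ht : 1 ≤ t) (hts : t < s) (hne : ¬(s = 2 ∧ t = 1)) :
    ∀ n : ℕ, 2^n ≤ genFib s (-t) (n+1) := by
  intro n
  induction n with
  | zero => simp [genFib]
  | succ n ih =>
    have h := (gf_growth ht hts hne (n+1)).2
    calc (2:ℤ)^(n+1) = 2 * 2^n := by ring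
    _ ≤ 2 * genFib s (-t) (n+1) := by linarith
    _ ≤ genFib s (-t) (n+2) := h

lemma gf_shift (ht : 1 ≤ t) (hts : t < s) (hne : ¬(s = 2 ∧ t = 1)) :
    ∀ j m : ℕ, 2^j * genFib s (-t) m ≤ genFib s (-t) (m + j) := by
  intro j
  induction j with
  | zero => intro m; simp
  | succ j ih =>
    intro m
    have h := (gf_growth ht hts hne (m+j)).2
    calc (2:ℤ)^(j+1) * genFib s (-t) m = 2 * (2^j * genFib s (-t) m) := by ring
    _ ≤ 2 * genFib s (-t) (m+j) := by linarith [ih m]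
    _ ≤ genFib s (-t) (m+j+1) := h

section
variable (ht : 1 ≤ t) (hts : t < s) (hne : ¬(s = 2 ∧ t = 1)) {r : ℕ} (hr : 0 < r)
include ht hts hne hr

set_option linter.unusedSectionVars false

lemma Z_nonneg (m : ℕ) : 0 ≤ Zf s t r m := (gf_growth ht hts hne _).1

lemma Z_pow (m : ℕ) : 2^m ≤ Zf s t r (m+1) := by
  have h1 : m + 1 ≤ r * (m+1) := by
    calc m + 1 = 1 * (m+1) := (one_mul _).symm
    _ ≤ r * (m+1) := Nat.mul_le_mul_right _ hr
  calc (2:ℤ)^m ≤ 2^(r*(m+1)-1) := pow_le_pow_right₀ (by norm_num) (by omega)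
  _ ≤ genFib s (-t) ((r*(m+1)-1)+1) := gf_pow2 ht hts hne _
  _ = Zf s t r (m+1) := by simp only [Zf]; congr 1; omega

lemma Z_one (m : ℕ) : 1 ≤ Zf s t r (m+1) := by
  have h := Z_pow ht hts hne hr (r := r) (s := s) (t := t) m
  have h2 : (0:ℤ) < 2^m := pow_pos (by norm_num) m
  linarith [Int.add_one_le_of_lt h2]

lemma Z_grow (m : ℕ) : 2 * Zf s t r m ≤ Zf s t r (m+1) := by
  have h := gf_shift ht hts hne r (r*m)
  have h2 : (2:ℤ) ≤ 2^r := by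
    calc (2:ℤ) = 2^1 := (pow_one 2).symm
    _ ≤ 2^r := pow_le_pow_right₀ (by norm_num) hr
  have h0 : (0:ℤ) ≤ genFib s (-t) (r*m) := (gf_growth ht hts hne _).1
  simp only [Zf, Nat.mul_succ]
  nlinarith

lemma Z_cat (p : ℕ) : Zf s t r p * Zf s t r (p+2) < Zf s t r (p+1)^2 := by
  have h := gf_cat (s := s) (t := t) (r*p) (r-1)
  have e1 : r*p + (r-1) + 1 = r*(p+1) := by
    have : r*(p+1) = r*p + r := Nat.mul_succ r p
    omega
  have e2 : r*p + 2*(r-1) + 2 = r*(p+2) := by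
    have h1 : r*(p+2) = r*(p+1) + r := Nat.mul_succ r (p+1)
    have h2 : r*(p+1) = r*p + r := Nat.mul_succ r p
    omega
  rw [e1, e2, show (r-1)+1 = r from by omega] at h
  have ht1 : (1:ℤ) ≤ t^(r*p) := by
    calc (1:ℤ) = 1^(r*p) := (one_pow _).symm
    _ ≤ t^(r*p) := pow_le_pow_left₀ (by norm_num) ht _
  have hf1 : (1:ℤ) ≤ genFib s (-t) r := by
    have := Z_one ht hts hne hr (r := r) (s := s) (t := t) 0
    rwa [Zf, Nat.mul_one] at this
  have goal : Zf s t r (p+1)^2 - Zf s t r p * Zf s t r (p+2) = t^(r*p) * genFib s (-t) r^2 := by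
    simp only [Zf]
    exact h
  nlinarith

lemma Zr_pos (m : ℕ) : (0:ℝ) < ((Zf s t r (m+1) : ℤ) : ℝ) := by
  have h := Z_one ht hts hne hr (r := r) (s := s) (t := t) m
  have : (1:ℝ) ≤ ((Zf s t r (m+1) : ℤ) : ℝ) := by exact_mod_cast h
  linarith

lemma S_summable (p : ℕ) : Summable (fun k : ℕ => 1 / ((Zf s t r (p+1+k) : ℤ) : ℝ)) := by
  apply Summable.of_nonneg_of_le _ _
    (summable_geometric_of_lt_one (by norm_num : (0:ℝ) ≤ 1/2) (by norm_num : (1/2:ℝ) < 1))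
  · intro k
    have := Zr_pos ht hts hne hr (r := r) (s := s) (t := t) (p+k)
    rw [show p+1+k = p+k+1 from by omega]
    positivity
  · intro k
    have hp : (2:ℤ)^(p+k) ≤ Zf s t r (p+k+1) := Z_pow ht hts hne hr _
    have h2 : (2:ℝ)^k ≤ ((Zf s t r (p+k+1) : ℤ) : ℝ) := by
      calc (2:ℝ)^k ≤ (2:ℝ)^(p+k) := pow_le_pow_right₀ (by norm_num) (by omega)
      _ ≤ _ := by exact_mod_cast hp
    rw [show p+1+k = p+k+1 from by omega, div_pow, one_pow]
    exact one_div_le_one_div_of_le (by positivity) h2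

lemma S_split (p : ℕ) : Sf s t r p = 1 / ((Zf s t r (p+1) : ℤ) : ℝ) + Sf s t r (p+1) := by
  rw [Sf, Summable.tsum_eq_zero_add (S_summable ht hts hne hr p), Nat.add_zero, Sf]
  congr 1
  exact tsum_congr fun k => by rw [show p+1+(k+1) = p+1+1+k from by omega]

lemma per_term (p : ℕ) : Gf s t r p - Gf s t r (p+1) < 1 / ((Zf s t r (p+1) : ℤ) : ℝ) := by
  have h0 : (0:ℝ) ≤ (Zf s t r p : ℝ) := by exact_mod_cast Z_nonneg ht hts hne hr p
  have h1 : (1:ℝ) ≤ (Zf s t r (p+1) : ℝ) := by exact_mod_cast Z_one ht hts hne hr p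
  have h2a : 2*(Zf s t r p : ℝ) ≤ (Zf s t r (p+1) : ℝ) := by exact_mod_cast Z_grow ht hts hne hr p
  have h2b : 2*(Zf s t r (p+1) : ℝ) ≤ (Zf s t r (p+2) : ℝ) := by exact_mod_cast Z_grow ht hts hne hr (p+1)
  have hcat : (Zf s t r p : ℝ) * (Zf s t r (p+2) : ℝ) < (Zf s t r (p+1) : ℝ)^2 := by
    exact_mod_cast Z_cat ht hts hne hr p
  have hba : (0:ℝ) < (Zf s t r (p+1) : ℝ) - (Zf s t r p : ℝ) := by linarith
  have hcb : (0:ℝ) < (Zf s t r (p+2) : ℝ) - (Zf s t r (p+1) : ℝ) := by linarith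
  rw [Gf, Gf, show p+1+1 = p+2 from rfl,
    div_sub_div _ _ (ne_of_gt hba) (ne_of_gt hcb),
    div_lt_div_iff₀ (by positivity) (by linarith)]
  nlinarith

lemma one_step (p : ℕ) : Sf s t r (p+1) - Gf s t r (p+1) ≤ Sf s t r p - Gf s t r p := by
  have h := per_term ht hts hne hr (r := r) (s := s) (t := t) p
  have h2 := S_split ht hts hne hr (r := r) (s := s) (t := t) p
  linarith

lemma iter_step (j p : ℕ) : Sf s t r (p+j) - Gf s t r (p+j) ≤ Sf s t r p - Gf s t r p := by
  induction j with
  | zero => simp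
  | succ j ih =>
    have := one_step ht hts hne hr (r := r) (s := s) (t := t) (p+j)
    rw [show p+(j+1) = p+j+1 from by omega]
    linarith

lemma S_nonneg (p : ℕ) : 0 ≤ Sf s t r p := by
  apply tsum_nonneg
  intro k
  have := Zr_pos ht hts hne hr (r := r) (s := s) (t := t) (p+k)
  rw [show p+1+k = p+k+1 from by omega]
  positivity

lemma G_bound (p : ℕ) : Gf s t r p ≤ 2 * (1/2:ℝ)^p := by
  have h2a : 2*(Zf s t r p : ℝ) ≤ (Zf s t r (p+1) : ℝ) := by exact_mod_cast Z_grow ht hts hne hr p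
  have h0 : (0:ℝ) ≤ (Zf s t r p : ℝ) := by exact_mod_cast Z_nonneg ht hts hne hr p
  have hp : (2:ℝ)^p ≤ (Zf s t r (p+1) : ℝ) := by exact_mod_cast Z_pow ht hts hne hr p
  have hb2 : (0:ℝ) < 2^p := by positivity
  have hba : (0:ℝ) < (Zf s t r (p+1) : ℝ) - (Zf s t r p : ℝ) := by nlinarith
  calc Gf s t r p = 1/((Zf s t r (p+1) : ℝ) - (Zf s t r p : ℝ)) := rfl
  _ ≤ 2/2^p := by
      rw [div_le_div_iff₀ hba hb2]
      nlinarith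
  _ = 2 * (1/2:ℝ)^p := by rw [div_pow, one_pow]; ring

lemma tail_ge (p : ℕ) : Gf s t r p ≤ Sf s t r p := by
  have key : ∀ j : ℕ, -(2 * (1/2:ℝ)^j) ≤ Sf s t r p - Gf s t r p := by
    intro j
    have h1 := iter_step ht hts hne hr (r := r) (s := s) (t := t) j p
    have h2 := S_nonneg ht hts hne hr (r := r) (s := s) (t := t) (p+j)
    have h3 := G_bound ht hts hne hr (r := r) (s := s) (t := t) (p+j)
    have h4 : ((1:ℝ)/2)^(p+j) ≤ (1/2:ℝ)^j :=
      pow_le_pow_of_le_one (by norm_num) (by norm_num) (by omega)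
    linarith
  have hlim : Filter.Tendsto (fun j : ℕ => -(2 * (1/2:ℝ)^j)) Filter.atTop (nhds 0) := by
    have h0 := tendsto_pow_atTop_nhds_zero_of_lt_one (by norm_num : (0:ℝ) ≤ 1/2) (by norm_num : (1/2:ℝ) < 1)
    have h2 := (h0.const_mul (2:ℝ)).neg
    simpa using h2
  linarith [le_of_tendsto' hlim key]

lemma tail_gt (p : ℕ) : Gf s t r p < Sf s t r p := by
  have h1 := per_term ht hts hne hr (r := r) (s := s) (t := t) p
  have h2 := S_split ht hts hne hr (r := r) (s := s) (t := t) p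
  have h3 := tail_ge ht hts hne hr (r := r) (s := s) (t := t) (p+1)
  linarith

end

/-- The tail sum exceeds 1/(f_{rn} - f_{r(n-1)}); equivalently the floor of its
reciprocal is strictly less than f_{rn} - f_{r(n-1)}. -/
theorem fib_tail_lower_bound (s t : ℤ) (ht : 1 ≤ t) (hts : t < s)
    (hne : ¬(s = 2 ∧ t = 1)) (n r : ℕ) (hn : 0 < n) (hr : 0 < r) :
    (1 : ℝ) / ((genFib s (-t) (r * n) : ℝ) - (genFib s (-t) (r * (n - 1)) : ℝ)) <
        (∑' k : ℕ, (1 : ℝ) / (genFib s (-t) (r * (n + k)) : ℝ)) ∧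
      ⌊(∑' k : ℕ, (1 : ℝ) / (genFib s (-t) (r * (n + k)) : ℝ))⁻¹⌋ <
        genFib s (-t) (r * n) - genFib s (-t) (r * (n - 1)) := by
  obtain ⟨p, rfl⟩ : ∃ p, n = p + 1 := ⟨n - 1, by omega⟩
  rw [show p + 1 - 1 = p from rfl]
  have hgt : Gf s t r p < Sf s t r p := tail_gt ht hts hne hr p
  have hG : Gf s t r p =
      (1 : ℝ) / ((genFib s (-t) (r * (p+1)) : ℝ) - (genFib s (-t) (r * p) : ℝ)) := rfl
  have hS : Sf s t r p = ∑' k : ℕ, (1 : ℝ) / (genFib s (-t) (r * (p + 1 + k)) : ℝ) := rfl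
  constructor
  · rw [← hG, ← hS]; exact hgt
  · -- floor part
    have h1 : (1:ℤ) ≤ Zf s t r (p+1) := Z_one ht hts hne hr p
    have h2 : 2 * Zf s t r p ≤ Zf s t r (p+1) := Z_grow ht hts hne hr p
    have h0 : (0:ℤ) ≤ Zf s t r p := Z_nonneg ht hts hne hr p
    have hDpos : (0:ℤ) < Zf s t r (p+1) - Zf s t r p := by linarith
    have hD1 : (1:ℤ) ≤ Zf s t r (p+1) - Zf s t r p := Int.add_one_le_of_lt hDpos
    set D : ℝ := ((Zf s t r (p+1) - Zf s t r p : ℤ) : ℝ) with hDdef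
    have hDposR : (0:ℝ) < D := by rw [hDdef]; exact_mod_cast hDpos
    have hGD : Gf s t r p = 1 / D := by
      rw [hG, hDdef]
      push_cast [Zf]
      ring_nf
    have hlt : 1 / D < Sf s t r p := hGD ▸ hgt
    have hSpos : 0 < Sf s t r p := lt_trans (by positivity) hlt
    have hinv : (Sf s t r p)⁻¹ < D := by
      have := inv_strictAnti₀ (by positivity : (0:ℝ) < 1/D) hlt
      rwa [one_div, inv_inv] at this
    rw [← hS]
    apply Int.floor_lt.mpr
    calc (Sf s t r p)⁻¹ < D := hinv
    _ = ((genFib s (-t) (r * (p+1)) - genFib s (-t) (r * p) : ℤ) : ℝ) := rfl
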